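/- Let q ∈ ℂ with q^N ≠ 1 and let P ∈ ℂ[X] be a polynomial of degree strictly less than N. Then for every integer i: P(q·ω^i) = ((q^N − 1)/N) · Σ_{j=1}^{N} P(ω^j)/(q·ω^{i−j} − 1). (All denominators are nonzero since q·ω^{i−j} = 1 would force q^N = 1.) -/
import Mathlib

open scoped BigOperators

noncomputable section

namespace Stmt8

/-- The primitive `N`-th root of unity `ω = exp(2πi/N)`. -/
def omega (N : ℕ) : ℂ := Complex.exp (2 * (Real.pi : ℂ) * Complex.I / (N : ℂ))

lemma sum_pow_Icc (N : ℕ) (hN : 0 < N) (z : ℂ) (hz : z ^ N = 1) :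
    ∑ j ∈ Finset.Icc 1 N, z ^ j = if z = 1 then (N : ℂ) else 0 := by
  by_cases h1 : z = 1
  · simp [h1]
  · rw [if_neg h1]
    have : Finset.Icc 1 N = Finset.Ico 1 (N + 1) := by
      ext x; simp [Nat.lt_succ_iff]
    rw [this, Finset.sum_Ico_eq_sub _ (by omega), geom_sum_eq h1, geom_sum_eq h1,
      pow_succ, hz, one_mul]
    simp

/-- Interpolation kernel for the q-shift on polynomials of degree `< N`. -/
theorem qshift_kernel (N : ℕ) (hN : 0 < N) (q : ℂ) (hq : q ^ N ≠ 1)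
    (P : Polynomial ℂ) (hP : P.natDegree < N) (i : ℤ) :
    P.eval (q * omega N ^ i)
      = (q ^ N - 1) / (N : ℂ) *
          ∑ j ∈ Finset.Icc 1 N,
            P.eval (omega N ^ (j : ℤ)) / (q * omega N ^ (i - (j : ℤ)) - 1) := by
  set ω := omega N with hωdef
  have hω : IsPrimitiveRoot ω N := Complex.isPrimitiveRoot_exp N hN.ne'
  have hω0 : ω ≠ 0 := by
    intro h
    have := hω.pow_eq_one
    rw [h, zero_pow hN.ne'] at this
    exact zero_ne_one this
  have hωN : ω ^ (N : ℤ) = 1 := by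
    rw [zpow_natCast]; exact hω.pow_eq_one
  have hqN1 : q ^ N - 1 ≠ 0 := sub_ne_zero.mpr hq
  have hN0 : (N : ℂ) ≠ 0 := Nat.cast_ne_zero.mpr hN.ne'
  -- x_j := q * ω^(i-j) satisfies x_j^N = q^N
  have hxN : ∀ t : ℤ, (q * ω ^ t) ^ N = q ^ N := by
    intro t
    rw [mul_pow, ← zpow_natCast (ω ^ t), ← zpow_mul, mul_comm t, zpow_mul, hωN, one_zpow,
      mul_one]
  have hx1 : ∀ t : ℤ, q * ω ^ t ≠ 1 := by
    intro t h
    exact hq (by rw [← hxN t, h, one_pow])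
  -- Step 1: rewrite each summand using geometric series
  have step1 : ∀ j : ℕ,
      P.eval (ω ^ (j : ℤ)) / (q * ω ^ (i - (j : ℤ)) - 1)
        = (∑ m ∈ Finset.range N, P.eval (ω ^ (j : ℤ)) * (q * ω ^ (i - (j : ℤ))) ^ m)
            / (q ^ N - 1) := by
    intro j
    have hx0 : q * ω ^ (i - (j : ℤ)) - 1 ≠ 0 := sub_ne_zero.mpr (hx1 _)
    rw [← Finset.mul_sum, geom_sum_eq (hx1 _), hxN]
    field_simp
  -- Step 2: expand P.eval and combine powers of ω
  have expand : ∀ j m : ℕ,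
      P.eval (ω ^ (j : ℤ)) * (q * ω ^ (i - (j : ℤ))) ^ m
        = ∑ k ∈ Finset.range N,
            P.coeff k * q ^ m * ω ^ (i * m) * (ω ^ ((k : ℤ) - (m : ℤ))) ^ j := by
    intro j m
    rw [Polynomial.eval_eq_sum_range' hP, Finset.sum_mul]
    refine Finset.sum_congr rfl fun k _ => ?_
    rw [← zpow_natCast (ω ^ (j : ℤ)) k, ← zpow_mul, mul_pow,
      ← zpow_natCast (ω ^ (i - (j : ℤ))) m, ← zpow_mul,
      ← zpow_natCast (ω ^ ((k : ℤ) - (m : ℤ))) j, ← zpow_mul]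
    have key : ω ^ ((j : ℤ) * k) * ω ^ ((i - (j : ℤ)) * m)
        = ω ^ (i * (m : ℤ)) * ω ^ (((k : ℤ) - (m : ℤ)) * j) := by
      rw [← zpow_add₀ hω0, ← zpow_add₀ hω0]
      congr 1
      ring
    linear_combination (P.coeff k * q ^ m) * key
  -- Step 3: orthogonality
  have hzN : ∀ c : ℤ, (ω ^ c) ^ N = 1 := by
    intro c
    rw [← zpow_natCast (ω ^ c), ← zpow_mul, mul_comm, zpow_mul, hωN, one_zpow]
  have hcond : ∀ m k : ℕ, m < N → k < N → ((ω ^ ((k : ℤ) - (m : ℤ)) = 1) ↔ k = m) := by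
    intro m k hm hk
    rw [hω.zpow_eq_one_iff_dvd]
    constructor
    · intro h
      have := Int.eq_zero_of_abs_lt_dvd h (by rw [abs_lt]; omega)
      omega
    · rintro rfl; simp
  -- Step 4: the main sum computation
  have main : ∑ j ∈ Finset.Icc 1 N, ∑ m ∈ Finset.range N,
        P.eval (ω ^ (j : ℤ)) * (q * ω ^ (i - (j : ℤ))) ^ m
      = (N : ℂ) * P.eval (q * ω ^ i) := by
    rw [Finset.sum_congr rfl fun j _ => Finset.sum_congr rfl fun m _ => expand j m,
      Finset.sum_comm]
    have inner : ∀ m ∈ Finset.range N,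
        ∑ j ∈ Finset.Icc 1 N, ∑ k ∈ Finset.range N,
            P.coeff k * q ^ m * ω ^ (i * m) * (ω ^ ((k : ℤ) - (m : ℤ))) ^ j
          = P.coeff m * q ^ m * ω ^ (i * m) * N := by
      intro m hm
      rw [Finset.sum_comm]
      have : ∀ k ∈ Finset.range N,
          ∑ j ∈ Finset.Icc 1 N,
              P.coeff k * q ^ m * ω ^ (i * m) * (ω ^ ((k : ℤ) - (m : ℤ))) ^ j
            = if k = m then P.coeff k * q ^ m * ω ^ (i * m) * N else 0 := by
        intro k hk
        rw [← Finset.mul_sum, sum_pow_Icc N hN _ (hzN _),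
          if_congr (hcond m k (Finset.mem_range.mp hm) (Finset.mem_range.mp hk)) rfl rfl,
          mul_ite, mul_zero]
      rw [Finset.sum_congr rfl this, Finset.sum_ite_eq' (Finset.range N) m
        (fun k => P.coeff k * q ^ m * ω ^ (i * m) * N), if_pos hm]
    rw [Finset.sum_congr rfl inner, Polynomial.eval_eq_sum_range' hP, Finset.mul_sum]
    refine Finset.sum_congr rfl fun m _ => ?_
    rw [mul_pow, ← zpow_natCast (ω ^ i) m, ← zpow_mul]
    ring
  rw [Finset.sum_congr rfl fun j _ => step1 j, ← Finset.sum_div, main]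
  field_simp

end Stmt8
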